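/- Let k be a field, G a finite group, P a normal subgroup of G, and M a semisimple k[G]-module. Then the restriction of M to P is a semisimple k[P]-module. -/

import Mathlib

/-!
Every `ρ g` maps `P`-subrepresentations to `P`-subrepresentations (as `P` is normal), so it
permutes the simple ones and preserves the socle of the restriction to `P`. The socle is therefore
a `G`-subrepresentation and has a `G`-stable complement. That complement contains no simple
`P`-subrepresentation, while in finite dimension every nonzero one contains a simple one; hence
the complement is zero and the socle is everything.
-/

open Function

theorem eq_top_of_forall_isAtom_le {α β : Type*} [SemilatticeInf α] [OrderBot α] [IsAtomic α]
    [Lattice β] [BoundedOrder β] [ComplementedLattice β] (f : InfHom β α)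
    (hf : Injective f) (hf_bot : f ⊥ = ⊥) {b : β} (hb : ∀ a : α, IsAtom a → a ≤ f b) :
    b = ⊤ := by
  obtain ⟨c, hc⟩ := exists_isCompl b
  suffices f c = ⊥ by rw [← hf_bot] at this; simpa [hf this] using hc.sup_eq_top
  refine (eq_bot_or_exists_atom_le (f c)).resolve_right ?_
  rintro ⟨a, ha, hac⟩
  refine ha.ne_bot (le_bot_iff.mp ?_)
  calc a ≤ f b ⊓ f c := le_inf (hb a ha) hac
    _ = ⊥ := by rw [← map_inf, hc.inf_eq_bot, hf_bot]

theorem OrderIso.map_sSup_setOf_isAtom {α : Type*} [CompleteLattice α] (e : α ≃o α) :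
    e (sSup {a | IsAtom a}) = sSup {a | IsAtom a} := by
  rw [e.map_sSup_eq_sSup_symm_preimage]
  congr 1
  ext a
  exact e.symm.isAtom_iff a

namespace Module

def socle (R M : Type*) [Semiring R] [AddCommMonoid M] [Module R M] : Submodule R M :=
  sSup {A | IsAtom A}

end Module

namespace Subrepresentation

variable {k G H V : Type*} [Semiring k] [AddCommMonoid V] [Module k V]

section comp

variable [Monoid G] [Monoid H] {ρ : Representation k G V}

def comp (σ : Subrepresentation ρ) (f : H →* G) : Subrepresentation (ρ.comp f) where
  toSubmodule := σ.toSubmodule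
  apply_mem_toSubmodule h _ hv := σ.apply_mem_toSubmodule (f h) hv

def compInfHom (f : H →* G) : InfHom (Subrepresentation ρ) (Subrepresentation (ρ.comp f)) where
  toFun σ := σ.comp f
  map_inf' _ _ := rfl

theorem compInfHom_injective (f : H →* G) : Injective (compInfHom (ρ := ρ) f) :=
  fun _ _ h ↦ toSubmodule_injective (congrArg (fun τ ↦ τ.toSubmodule) h)

instance [WellFoundedLT (Submodule k V)] : WellFoundedLT (Subrepresentation ρ) :=
  StrictMono.wellFoundedLT (f := toSubmodule) fun _ _ h ↦ h

end comp

section conj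

variable [Group G] {ρ : Representation k G V} {N : Subgroup G} [N.Normal]

def conj (g : G) (σ : Subrepresentation (ρ.comp N.subtype)) :
    Subrepresentation (ρ.comp N.subtype) where
  toSubmodule := σ.toSubmodule.map (ρ g)
  apply_mem_toSubmodule n := by
    rintro _ ⟨v, hv, rfl⟩
    -- `ρ n (ρ g v) = ρ g (ρ (g⁻¹ n g) v)`, and `g⁻¹ n g ∈ N` by normality.
    refine ⟨_, σ.apply_mem_toSubmodule (MulAut.conjNormal g⁻¹ n) hv, ?_⟩
    simp [← Module.End.mul_apply, ← map_mul, mul_assoc]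

theorem conj_conj (g h : G) (σ : Subrepresentation (ρ.comp N.subtype)) :
    conj g (conj h σ) = conj (g * h) σ := by
  ext v
  simp [conj]

theorem conj_one (σ : Subrepresentation (ρ.comp N.subtype)) : conj 1 σ = σ := by
  ext v
  simp [conj]

theorem conj_mono (g : G) : Monotone (conj (ρ := ρ) (N := N) g) :=
  fun _ _ h ↦ Submodule.map_mono h

def conjOrderIso (g : G) :
    Subrepresentation (ρ.comp N.subtype) ≃o Subrepresentation (ρ.comp N.subtype) :=
  Equiv.toOrderIso
    { toFun := conj g
      invFun := conj g⁻¹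
      left_inv σ := by rw [conj_conj, inv_mul_cancel, conj_one]
      right_inv σ := by rw [conj_conj, mul_inv_cancel, conj_one] }
    (conj_mono g) (conj_mono g⁻¹)

end conj

end Subrepresentation

namespace Representation

open scoped MonoidAlgebra

theorem apply_mem_socle_comp_subtype {k G V : Type*} [CommSemiring k] [Group G]
    [AddCommMonoid V] [Module k V] (ρ : Representation k G V) {N : Subgroup G} [N.Normal]
    (g : G) {v : V} (hv : v ∈ Module.socle k[N] (Representation.asModule (ρ.comp N.subtype))) :
    ρ g v ∈ Module.socle k[N] (Representation.asModule (ρ.comp N.subtype)) := by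
  let Φ := Subrepresentation.subrepresentationSubmoduleOrderIso (ρ := ρ.comp N.subtype)
  rw [Module.socle,
    ← ((Φ.symm.trans (Subrepresentation.conjOrderIso g)).trans Φ).map_sSup_setOf_isAtom]
  exact ⟨v, hv, rfl⟩

end Representation

open Subrepresentation in
theorem clifford_semisimple_restriction_general
    (k : Type) [Field k] (G : Type) [Group G]
    (P : Subgroup G) [P.Normal]
    (M : Type) [AddCommGroup M] [Module k M] [Module.Finite k M]
    (ρ : Representation k G M)
    (hss : IsSemisimpleModule (MonoidAlgebra k G) ρ.asModule) :
    IsSemisimpleModule (MonoidAlgebra k P) (Representation.asModule (ρ.comp P.subtype)) := by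
  have := ρ.isSemisimpleRepresentation_iff_isSemisimpleModule_asModule.mpr hss
  let Φ := subrepresentationSubmoduleOrderIso (ρ := ρ.comp P.subtype)
  let S : Subrepresentation ρ :=
    ⟨(Φ.symm (Module.socle _ _)).toSubmodule, fun g _ hv ↦ ρ.apply_mem_socle_comp_subtype g hv⟩
  have hS : S = ⊤ := eq_top_of_forall_isAtom_le (compInfHom P.subtype) (compInfHom_injective _) rfl
    fun a ha ↦ Φ.le_symm_apply.mpr (le_sSup ((Φ.isAtom_iff a).mpr ha))
  have hsocle : Φ.symm (Module.socle _ _) = ⊤ :=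
    toSubmodule_injective (congrArg (fun σ : Subrepresentation ρ ↦ σ.toSubmodule) hS)
  refine .of_sSup_simples_eq_top ?_
  simp_rw [isSimpleModule_iff_isAtom]
  exact (map_eq_top_iff Φ.symm).mp hsocle

/-- **Clifford's theorem.** If `k` is a field, `G` a finite group, `P` a normal subgroup
of `G`, and `M` a semisimple `k[G]`-module (given by a representation `ρ` of `G` on `M`),
then the restriction of `M` to `P` is a semisimple `k[P]`-module. -/
theorem clifford_semisimple_restriction
    (k : Type) [Field k] (G : Type) [Group G] [Finite G]
    (P : Subgroup G) [P.Normal]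
    (M : Type) [AddCommGroup M] [Module k M] [Module.Finite k M]
    (ρ : Representation k G M)
    (hss : IsSemisimpleModule (MonoidAlgebra k G) ρ.asModule) :
    IsSemisimpleModule (MonoidAlgebra k P) (Representation.asModule (ρ.comp P.subtype)) :=
  clifford_semisimple_restriction_general k G P M ρ hss
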